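/- arXiv:1502.06528 — 10 statements merged into one kernel-verified Lean document; each statement's English description precedes it below -/
import Mathlib

section
/- Let n : ℕ and let f : Finset (Fin n) → ℝ be nonnegative, nonincreasing (S ⊆ T implies f(T) ≤ f(S)), and supermodular, i.e. f(S ∩ T) + f(S ∪ T) ≥ f(S) + f(T) for all S, T ⊆ Fin n. Then f is weakly-1-supermodular: for all S, T ⊆ Fin n with T \ S nonempty, f(S) - f(S ∪ T) ≤ |T \ S| · max_{i ∈ T \ S} (f(S) - f(S ∪ {i})). -/
/-!
Adding the elements of `U` to `S` one at a time, supermodularity applied to `S ∪ U` and `S ∪ {i}`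
(whose intersection is `S` when `i ∉ U`) bounds each marginal loss by the loss of adding `i` to `S`
alone. Hence the total loss `f S - f (S ∪ T)` is at most the sum of the single-element losses over
`T \ S`, which is at most `|T \ S|` times the largest of them.
-/

/-- A set function is supermodular if `f (S ∩ T) + f (S ∪ T) ≥ f S + f T`. -/
def Supermodular {n : ℕ} (f : Finset (Fin n) → ℝ) : Prop :=
  ∀ S T : Finset (Fin n), f S + f T ≤ f (S ∩ T) + f (S ∪ T)

open Finset

theorem Supermodular.sub_union_le_sum {n : ℕ} {f : Finset (Fin n) → ℝ} (hsup : Supermodular f)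
    (S U : Finset (Fin n)) : f S - f (S ∪ U) ≤ ∑ i ∈ U, (f S - f (S ∪ {i})) := by
  induction U using Finset.induction_on with
  | empty => simp
  | @insert i U hi ih =>
    have hinter : (S ∪ U) ∩ (S ∪ {i}) = S := by
      rw [← union_inter_distrib_left, inter_singleton_of_notMem hi, union_empty]
    have hunion : (S ∪ U) ∪ (S ∪ {i}) = S ∪ insert i U := by
      ext x; simp only [mem_union, mem_insert, mem_singleton]; tauto
    have hstep := hsup (S ∪ U) (S ∪ {i})
    rw [hinter, hunion] at hstep
    rw [sum_insert hi]
    linarith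

theorem supermodular_implies_weakly_one_supermodular_general
    (n : ℕ) (f : Finset (Fin n) → ℝ)
    (hsup : Supermodular f) :
    ∀ (S T : Finset (Fin n)) (h : (T \ S).Nonempty),
      f S - f (S ∪ T) ≤
        ((T \ S).card : ℝ) * (T \ S).sup' h (fun i => f S - f (S ∪ {i})) := by
  intro S T h
  calc f S - f (S ∪ T) = f S - f (S ∪ (T \ S)) := by rw [union_sdiff_self_eq_union]
    _ ≤ ∑ i ∈ T \ S, (f S - f (S ∪ {i})) := hsup.sub_union_le_sum S (T \ S)
    _ ≤ (T \ S).card • (T \ S).sup' h (fun i => f S - f (S ∪ {i})) :=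
      sum_le_card_nsmul _ _ _ fun i hi => le_sup' (fun i => f S - f (S ∪ {i})) hi
    _ = _ := nsmul_eq_mul _ _

/-- A nonnegative, nonincreasing, supermodular set function is weakly-1-supermodular. -/
theorem supermodular_implies_weakly_one_supermodular
    (n : ℕ) (f : Finset (Fin n) → ℝ)
    (hnonneg : ∀ S : Finset (Fin n), 0 ≤ f S)
    (hmono : ∀ S T : Finset (Fin n), S ⊆ T → f T ≤ f S)
    (hsup : Supermodular f) :
    ∀ (S T : Finset (Fin n)) (h : (T \ S).Nonempty),
      f S - f (S ∪ T) ≤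
        ((T \ S).card : ℝ) * (T \ S).sup' h (fun i => f S - f (S ∪ {i})) :=
  supermodular_implies_weakly_one_supermodular_general n f hsup
end

section
/- Let f : Finset (Fin n) → ℝ be weakly-α-supermodular with α ≥ 1, let k ≥ 1 be a natural number, and let S* ⊆ Fin n with |S*| ≤ k. Let S ⊆ Fin n be arbitrary and let i* ∈ Fin n minimize f(S ∪ {i}) over all i ∈ Fin n. Then f(S ∪ {i*}) - f(S*) ≤ (1 - 1/(αk)) · (f(S) - f(S*)). -/
/-- A set function `f` is weakly-`α`-supermodular if it is nonnegative, nonincreasing,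
and for all `S T` with `T \ S` nonempty,
`f S - f (S ∪ T) ≤ α * |T \ S| * max_{i ∈ T \ S} (f S - f (S ∪ {i}))`. -/
def WeaklySupermodular {n : ℕ} (α : ℝ) (f : Finset (Fin n) → ℝ) : Prop :=
  (∀ S : Finset (Fin n), 0 ≤ f S) ∧
  (∀ S T : Finset (Fin n), S ⊆ T → f T ≤ f S) ∧
  (∀ (S T : Finset (Fin n)) (h : (T \ S).Nonempty),
    f S - f (S ∪ T) ≤
      α * ((T \ S).card : ℝ) * (T \ S).sup' h (fun i => f S - f (S ∪ {i})))

/-! Writing `c = α k` and `b` for the greedy gain `f S - f (S ∪ {i*})`, weak supermodularity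
applied to `S` and `S*` together with monotonicity gives `f S - f S* ≤ c b`, since no element of
`S* \ S` gains more than `i*`. Removing `b ≥ (f S - f S*) / c` from the gap is the claimed
contraction. -/

/-- For `c = 0` this uses `1 / 0 = 0`: then `a ≤ 0`, and the claim is just `a - b ≤ a`. -/
lemma sub_le_one_sub_one_div_mul_of_le_mul {a b c : ℝ} (hc : 0 ≤ c) (hb : 0 ≤ b)
    (h : a ≤ c * b) : a - b ≤ (1 - 1 / c) * a := by
  rcases hc.eq_or_lt with rfl | hc
  · simpa using hb
  · have : a / c ≤ b := (div_le_iff₀' hc).2 h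
    rw [one_sub_mul, one_div_mul_eq_div]
    linarith

namespace WeaklySupermodular

variable {n : ℕ} {α : ℝ} {f : Finset (Fin n) → ℝ}

lemma antitone (hf : WeaklySupermodular α f) {S T : Finset (Fin n)} (h : S ⊆ T) :
    f T ≤ f S :=
  hf.2.1 S T h

lemma gain_nonneg (hf : WeaklySupermodular α f) (S T : Finset (Fin n)) :
    0 ≤ f S - f (S ∪ T) :=
  sub_nonneg.2 (hf.antitone Finset.subset_union_left)

lemma sub_le_mul_card_mul_greedy_gain (hf : WeaklySupermodular α f) (hα : 0 ≤ α)
    (S T : Finset (Fin n)) {istar : Fin n}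
    (hmin : ∀ i : Fin n, f (S ∪ {istar}) ≤ f (S ∪ {i})) :
    f S - f T ≤ α * (T \ S).card * (f S - f (S ∪ {istar})) := by
  have hgain := hf.gain_nonneg S {istar}
  by_cases hne : (T \ S).Nonempty
  · have hmax : (T \ S).sup' hne (fun i => f S - f (S ∪ {i})) ≤ f S - f (S ∪ {istar}) :=
      Finset.sup'_le _ _ fun i _ => by linarith [hmin i]
    calc f S - f T ≤ f S - f (S ∪ T) :=
          sub_le_sub_left (hf.antitone Finset.subset_union_right) _
      _ ≤ α * (T \ S).card * (T \ S).sup' hne (fun i => f S - f (S ∪ {i})) := hf.2.2 S T hne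
      _ ≤ α * (T \ S).card * (f S - f (S ∪ {istar})) := by gcongr
  · have hTS : T ⊆ S := Finset.sdiff_eq_empty_iff_subset.1 (by simpa using hne)
    have : 0 ≤ α * (T \ S).card * (f S - f (S ∪ {istar})) := by positivity
    linarith [hf.antitone hTS]

end WeaklySupermodular

theorem greedy_step_progress_general
    (n : ℕ) (α : ℝ) (hα : 1 ≤ α) (f : Finset (Fin n) → ℝ)
    (hf : WeaklySupermodular α f)
    (k : ℕ)
    (Sstar : Finset (Fin n)) (hSstar : Sstar.card ≤ k)
    (S : Finset (Fin n)) (istar : Fin n)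
    (hmin : ∀ i : Fin n, f (S ∪ {istar}) ≤ f (S ∪ {i})) :
    f (S ∪ {istar}) - f Sstar ≤ (1 - 1 / (α * k)) * (f S - f Sstar) := by
  have hα₀ : 0 ≤ α := by linarith
  have hgain := hf.gain_nonneg S {istar}
  have hcard : ((Sstar \ S).card : ℝ) ≤ k := by
    exact_mod_cast (Finset.card_le_card Finset.sdiff_subset).trans hSstar
  have hgap : f S - f Sstar ≤ α * k * (f S - f (S ∪ {istar})) :=
    (hf.sub_le_mul_card_mul_greedy_gain hα₀ S Sstar hmin).trans (by gcongr)
  have := sub_le_one_sub_one_div_mul_of_le_mul (by positivity) hgain hgap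
  linarith

/-- A single greedy step reduces the gap to the optimal value by a factor `1 - 1/(αk)`. -/
theorem greedy_step_progress
    (n : ℕ) (α : ℝ) (hα : 1 ≤ α) (f : Finset (Fin n) → ℝ)
    (hf : WeaklySupermodular α f)
    (k : ℕ) (hk : 1 ≤ k)
    (Sstar : Finset (Fin n)) (hSstar : Sstar.card ≤ k)
    (S : Finset (Fin n)) (istar : Fin n)
    (hmin : ∀ i : Fin n, f (S ∪ {istar}) ≤ f (S ∪ {i})) :
    f (S ∪ {istar}) - f Sstar ≤ (1 - 1 / (α * k)) * (f S - f Sstar) :=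
  greedy_step_progress_general n α hα f hf k Sstar hSstar S istar hmin
end

section
/- Let f : Finset (Fin n) → ℝ be weakly-α-supermodular with α ≥ 1, let k ≥ 1 be a natural number, and let S* ⊆ Fin n with |S*| ≤ k. Let S : ℕ → Finset (Fin n) be a greedy extension sequence for f starting from some S₀. Then for every t ∈ ℕ, f(S t) - f(S*) ≤ (f(S₀) - f(S*)) · (1 - 1/(αk))^t. -/
/-- `S` is a greedy extension sequence for `f` starting from `S₀`: `S 0 = S₀` and each step
adds an element minimizing `f (S t ∪ {i})` over all `i`. -/
def GreedySeq {n : ℕ} (f : Finset (Fin n) → ℝ) (S₀ : Finset (Fin n))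
    (S : ℕ → Finset (Fin n)) : Prop :=
  S 0 = S₀ ∧
  ∀ t : ℕ, ∃ i : Fin n,
    S (t + 1) = S t ∪ {i} ∧ ∀ j : Fin n, f (S t ∪ {i}) ≤ f (S t ∪ {j})

/-! Let `T` be an optimal set with `|T| ≤ k`. Weak supermodularity applied to `S ∪ T` shows that some
single element of `T \ S` gains at least `(f S - f T) / (α k)`, and the greedy step gains at least
as much, so each step multiplies the gap `f S - f T` by at most `1 - 1 / (α k)`. -/

namespace WeaklySupermodular

variable {n : ℕ} {α : ℝ} {f : Finset (Fin n) → ℝ}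

theorem antitone_s2 (hf : WeaklySupermodular α f) : Antitone f :=
  fun S T hST => hf.2.1 S T hST

theorem sub_le_mul_greedy_gain (hf : WeaklySupermodular α f) (hα : 0 ≤ α)
    {S T : Finset (Fin n)} {k : ℕ} (hT : T.card ≤ k) {i : Fin n}
    (hi : ∀ j, f (S ∪ {i}) ≤ f (S ∪ {j})) :
    f S - f T ≤ α * k * (f S - f (S ∪ {i})) := by
  have hgain : 0 ≤ f S - f (S ∪ {i}) :=
    sub_nonneg.2 (hf.antitone_s2 Finset.subset_union_left)
  by_cases hTS : (T \ S).Nonempty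
  · obtain ⟨j, -, hj⟩ := Finset.exists_mem_eq_sup' hTS fun j => f S - f (S ∪ {j})
    have hcard : ((T \ S).card : ℝ) ≤ k :=
      mod_cast (Finset.card_le_card Finset.sdiff_subset).trans hT
    calc f S - f T ≤ f S - f (S ∪ T) := by
          gcongr; exact hf.antitone_s2 Finset.subset_union_right
      _ ≤ α * (T \ S).card * (f S - f (S ∪ {j})) := hj ▸ hf.2.2 S T hTS
      _ ≤ α * k * (f S - f (S ∪ {i})) := by
          gcongr
          · exact sub_nonneg.2 (hf.antitone_s2 Finset.subset_union_left)
          · exact hi j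
  · have hTS : T ⊆ S := Finset.sdiff_eq_empty_iff_subset.1 (Finset.not_nonempty_iff_eq_empty.1 hTS)
    calc f S - f T ≤ 0 := sub_nonpos.2 (hf.antitone_s2 hTS)
      _ ≤ α * k * (f S - f (S ∪ {i})) := mul_nonneg (by positivity) hgain

end WeaklySupermodular

theorem GreedySeq.sub_succ_le {n : ℕ} {α : ℝ} {f : Finset (Fin n) → ℝ}
    (hf : WeaklySupermodular α f) (hα : 0 ≤ α) {S₀ : Finset (Fin n)} {S : ℕ → Finset (Fin n)}
    (hS : GreedySeq f S₀ S) {T : Finset (Fin n)} {k : ℕ} (hT : T.card ≤ k) (t : ℕ) :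
    f (S (t + 1)) - f T ≤ (1 - 1 / (α * k)) * (f (S t) - f T) := by
  obtain ⟨i, hSi, hi⟩ := hS.2 t
  have hgain : (f (S t) - f T) / (α * k) ≤ f (S t) - f (S t ∪ {i}) :=
    div_le_of_le_mul₀ (by positivity)
      (sub_nonneg.2 (hf.antitone_s2 Finset.subset_union_left))
      (by linarith [hf.sub_le_mul_greedy_gain hα hT hi])
  rw [hSi]
  linarith [show (1 - 1 / (α * k)) * (f (S t) - f T) = f (S t) - f T - (f (S t) - f T) / (α * k)
    by ring]

theorem one_sub_one_div_mul_natCast_nonneg {α : ℝ} (hα : 1 ≤ α) (k : ℕ) :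
    0 ≤ 1 - 1 / (α * k) := by
  rcases Nat.eq_zero_or_pos k with rfl | hk
  · simp
  · have : (1 : ℝ) ≤ α * k := one_le_mul_of_one_le_of_one_le hα (Nat.one_le_cast.2 hk)
    linarith [div_le_one_of_le₀ this (by linarith)]

theorem greedy_geometric_decay_general
    (n : ℕ) (α : ℝ) (hα : 1 ≤ α) (f : Finset (Fin n) → ℝ)
    (hf : WeaklySupermodular α f)
    (k : ℕ)
    (Sstar : Finset (Fin n)) (hSstar : Sstar.card ≤ k)
    (S₀ : Finset (Fin n)) (S : ℕ → Finset (Fin n))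
    (hS : GreedySeq f S₀ S) :
    ∀ t : ℕ, f (S t) - f Sstar ≤ (f S₀ - f Sstar) * (1 - 1 / (α * k)) ^ t := by
  intro t
  have hdecay := le_geom (u := fun t => f (S t) - f Sstar)
    (one_sub_one_div_mul_natCast_nonneg hα k) t
    fun t _ => hS.sub_succ_le hf (by linarith) hSstar t
  simpa only [hS.1, mul_comm] using hdecay

/-- After `t` greedy steps the gap to the optimum shrinks by a factor `(1 - 1/(αk))^t`. -/
theorem greedy_geometric_decay
    (n : ℕ) (α : ℝ) (hα : 1 ≤ α) (f : Finset (Fin n) → ℝ)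
    (hf : WeaklySupermodular α f)
    (k : ℕ) (hk : 1 ≤ k)
    (Sstar : Finset (Fin n)) (hSstar : Sstar.card ≤ k)
    (S₀ : Finset (Fin n)) (S : ℕ → Finset (Fin n))
    (hS : GreedySeq f S₀ S) :
    ∀ t : ℕ, f (S t) - f Sstar ≤ (f S₀ - f Sstar) * (1 - 1 / (α * k)) ^ t :=
  greedy_geometric_decay_general n α hα f hf k Sstar hSstar S₀ S hS
end

section
/- Let f : Finset (Fin n) → ℝ be weakly-α-supermodular with α ≥ 1, let k ≥ 1 be a natural number, and let S* ⊆ Fin n with |S*| ≤ k and f(S*) > 0. Let ρ ≥ 1 and ε > 0 with ε ≤ ρ, and suppose S₀ ⊆ Fin n satisfies f(S₀) ≤ ρ · f(S*). Then there exists S ⊆ Fin n with S₀ ⊆ S, |S| ≤ |S₀| + ⌈α·k·ln(ρ/ε)⌉, and f(S) ≤ (1 + ε) · f(S*). -/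
open Finset

theorem one_sub_inv_pow_ceil_mul_le_exp_neg {c : ℝ} (hc : 1 ≤ c) (L : ℝ) :
    (1 - c⁻¹) ^ ⌈c * L⌉₊ ≤ Real.exp (-L) := by
  have hc₀ : 0 < c := zero_lt_one.trans_le hc
  calc (1 - c⁻¹) ^ ⌈c * L⌉₊ ≤ Real.exp (-c⁻¹) ^ ⌈c * L⌉₊ :=
        pow_le_pow_left₀ (sub_nonneg.2 (inv_le_one_of_one_le₀ hc))
          (by linarith [Real.add_one_le_exp (-c⁻¹)]) _
    _ = Real.exp (-(c⁻¹ * ⌈c * L⌉₊)) := by rw [← Real.exp_nat_mul]; ring_nf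
    _ ≤ Real.exp (-L) :=
        Real.exp_le_exp.2 (neg_le_neg ((le_inv_mul_iff₀ hc₀).2 (Nat.le_ceil _)))

namespace WeaklySupermodular

variable {n : ℕ} {α : ℝ} {f : Finset (Fin n) → ℝ}

theorem exists_sub_le_mul_gain (hf : WeaklySupermodular α f) {S Sstar : Finset (Fin n)} {k : ℕ}
    (hSstar : #Sstar ≤ k) (hlt : f Sstar < f S) :
    ∃ i, f S - f Sstar ≤ α * k * (f S - f (insert i S)) := by
  obtain ⟨-, hmono, hsup⟩ := hf
  have hne : (Sstar \ S).Nonempty :=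
    sdiff_nonempty.2 fun h => (hmono _ _ h).not_gt hlt
  obtain ⟨i, -, hi⟩ := exists_mem_eq_sup' hne fun i => f S - f (S ∪ {i})
  refine ⟨i, ?_⟩
  have hgain : f S - f Sstar ≤ α * #(Sstar \ S) * (f S - f (insert i S)) := by
    have := hsup S Sstar hne
    rw [hi, union_singleton] at this
    linarith [hmono Sstar (S ∪ Sstar) subset_union_right]
  have hcard : (#(Sstar \ S) : ℝ) ≤ k := by
    exact_mod_cast (card_le_card sdiff_subset).trans hSstar
  -- `hgain` forces `α` times the gain to be positive, so `|S* \ S|` may be enlarged to `k`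
  have hαgain : 0 ≤ α * (f S - f (insert i S)) := by
    by_contra! h
    nlinarith [mul_nonpos_of_nonneg_of_nonpos (Nat.cast_nonneg (α := ℝ) #(Sstar \ S)) h.le]
  nlinarith

theorem exists_insert_sub_le (hf : WeaklySupermodular α f) {S Sstar : Finset (Fin n)} {k : ℕ}
    (hαk : 0 < α * k) (hSstar : #Sstar ≤ k) (hlt : f Sstar < f S) :
    ∃ i, f (insert i S) - f Sstar ≤ (1 - (α * k)⁻¹) * (f S - f Sstar) := by
  obtain ⟨i, hi⟩ := hf.exists_sub_le_mul_gain hSstar hlt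
  refine ⟨i, ?_⟩
  have : (α * k)⁻¹ * (f S - f Sstar) ≤ f S - f (insert i S) := by
    rwa [inv_mul_le_iff₀ hαk]
  linarith

theorem exists_superset_sub_le_pow (hf : WeaklySupermodular α f) {Sstar : Finset (Fin n)}
    {k : ℕ} (hαk : 1 ≤ α * k) (hSstar : #Sstar ≤ k) (S₀ : Finset (Fin n)) (m : ℕ) :
    ∃ S, S₀ ⊆ S ∧ #S ≤ #S₀ + m ∧
      f S - f Sstar ≤ (1 - (α * k)⁻¹) ^ m * max 0 (f S₀ - f Sstar) := by
  have hq : 0 ≤ 1 - (α * k)⁻¹ := sub_nonneg.2 (inv_le_one_of_one_le₀ hαk)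
  induction m with
  | zero => exact ⟨S₀, subset_rfl, le_rfl, by simp⟩
  | succ m ih =>
    obtain ⟨S, hS₀S, hcard, hδ⟩ := ih
    rcases le_or_gt (f S) (f Sstar) with hle | hlt
    · refine ⟨S, hS₀S, by omega, ?_⟩
      have := mul_nonneg (pow_nonneg hq (m + 1)) (le_max_left 0 (f S₀ - f Sstar))
      linarith
    · obtain ⟨i, hi⟩ := hf.exists_insert_sub_le (by linarith) hSstar hlt
      refine ⟨insert i S, hS₀S.trans (subset_insert i S),
        (card_insert_le i S).trans (by omega), ?_⟩
      calc f (insert i S) - f Sstar ≤ (1 - (α * k)⁻¹) * (f S - f Sstar) := hi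
        _ ≤ (1 - (α * k)⁻¹) * ((1 - (α * k)⁻¹) ^ m * max 0 (f S₀ - f Sstar)) :=
            mul_le_mul_of_nonneg_left hδ hq
        _ = (1 - (α * k)⁻¹) ^ (m + 1) * max 0 (f S₀ - f Sstar) := by ring

end WeaklySupermodular

theorem greedy_extension_multiplicative_general
    (n : ℕ) (α : ℝ) (hα : 1 ≤ α) (f : Finset (Fin n) → ℝ)
    (hf : WeaklySupermodular α f)
    (k : ℕ) (hk : 1 ≤ k)
    (Sstar : Finset (Fin n)) (hSstar : Sstar.card ≤ k)
    (ρ ε : ℝ) (hρ : 1 ≤ ρ) (hε : 0 < ε)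
    (S₀ : Finset (Fin n)) (hS₀ : f S₀ ≤ ρ * f Sstar) :
    ∃ S : Finset (Fin n), S₀ ⊆ S ∧
      S.card ≤ S₀.card + ⌈α * (k : ℝ) * Real.log (ρ / ε)⌉₊ ∧
      f S ≤ (1 + ε) * f Sstar := by
  have hαk : 1 ≤ α * k := one_le_mul_of_one_le_of_one_le hα (by exact_mod_cast hk)
  obtain ⟨S, hS₀S, hcard, hδ⟩ := hf.exists_superset_sub_le_pow hαk hSstar S₀
    ⌈α * (k : ℝ) * Real.log (ρ / ε)⌉₊
  refine ⟨S, hS₀S, hcard, ?_⟩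
  have hρ₀ : 0 < ρ := zero_lt_one.trans_le hρ
  have hdecay := one_sub_inv_pow_ceil_mul_le_exp_neg hαk (Real.log (ρ / ε))
  rw [Real.exp_neg, Real.exp_log (div_pos hρ₀ hε), inv_div] at hdecay
  have hM : max 0 (f S₀ - f Sstar) ≤ ρ * f Sstar :=
    max_le (mul_nonneg hρ₀.le (hf.1 Sstar)) (by linarith [hf.1 Sstar])
  calc f S ≤ f Sstar + ε / ρ * (ρ * f Sstar) := by
        have := mul_le_mul hdecay hM (le_max_left _ _) (div_pos hε hρ₀).le
        linarith
    _ = (1 + ε) * f Sstar := by field_simp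

/-- Starting from a `ρ`-approximate solution `S₀`, a greedy extension of size at most
`|S₀| + ⌈α k ln(ρ/ε)⌉` is a `(1+ε)`-approximation. -/
theorem greedy_extension_multiplicative
    (n : ℕ) (α : ℝ) (hα : 1 ≤ α) (f : Finset (Fin n) → ℝ)
    (hf : WeaklySupermodular α f)
    (k : ℕ) (hk : 1 ≤ k)
    (Sstar : Finset (Fin n)) (hSstar : Sstar.card ≤ k) (hpos : 0 < f Sstar)
    (ρ ε : ℝ) (hρ : 1 ≤ ρ) (hε : 0 < ε) (hερ : ε ≤ ρ)
    (S₀ : Finset (Fin n)) (hS₀ : f S₀ ≤ ρ * f Sstar) :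
    ∃ S : Finset (Fin n), S₀ ⊆ S ∧
      S.card ≤ S₀.card + ⌈α * (k : ℝ) * Real.log (ρ / ε)⌉₊ ∧
      f S ≤ (1 + ε) * f Sstar :=
  greedy_extension_multiplicative_general n α hα f hf k hk Sstar hSstar ρ ε hρ hε S₀ hS₀
end

section
/- Let f : Finset (Fin n) → ℝ be weakly-α-supermodular with α ≥ 1, let φ ≥ 0 and φ_stop be reals with φ < φ_stop ≤ f(S₀) for a given S₀ ⊆ Fin n, and suppose there exists a set S' of cardinality k_f ≥ 1 with f(S') ≤ φ. Then there exists S ⊆ Fin n with S₀ ⊆ S, |S| ≤ |S₀| + ⌈α · k_f · ln( f(S₀) / (φ_stop - φ) )⌉, and f(S) ≤ φ_stop. -/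
open Finset Real

namespace WeaklySupermodular

variable {n : ℕ} {α : ℝ} {f : Finset (Fin n) → ℝ}

theorem exists_gain_ge (hf : WeaklySupermodular α f) (hα : 0 ≤ α) {S S' : Finset (Fin n)}
    {φ : ℝ} (hS' : f S' ≤ φ) (hS : φ < f S) :
    ∃ i, f S - φ ≤ α * S'.card * (f S - f (S ∪ {i})) := by
  obtain ⟨-, hanti, hsup⟩ := hf
  have hne : (S' \ S).Nonempty := by
    refine nonempty_iff_ne_empty.2 fun h => ?_
    have := hanti S' S (sdiff_eq_empty_iff_subset.1 h)
    linarith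
  obtain ⟨i, -, hi⟩ := exists_mem_eq_sup' hne fun i => f S - f (S ∪ {i})
  refine ⟨i, ?_⟩
  have hgain : 0 ≤ f S - f (S ∪ {i}) := sub_nonneg.2 (hanti _ _ subset_union_left)
  have hcard : ((S' \ S).card : ℝ) ≤ S'.card := by exact_mod_cast card_le_card sdiff_subset
  calc f S - φ ≤ f S - f (S ∪ S') := by
        linarith [hanti S' (S ∪ S') subset_union_right]
    _ ≤ α * (S' \ S).card * (f S - f (S ∪ {i})) := hi ▸ hsup S S' hne
    _ ≤ α * S'.card * (f S - f (S ∪ {i})) := by gcongr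

theorem exists_excess_le_exp_mul (hf : WeaklySupermodular α f) {S S' : Finset (Fin n)} {φ : ℝ}
    (hS' : f S' ≤ φ) (hc : 0 < α * S'.card) (hS : φ < f S) :
    ∃ i, f (S ∪ {i}) - φ ≤ exp (-(1 / (α * S'.card))) * (f S - φ) := by
  have hα : 0 < α := pos_of_mul_pos_left hc (Nat.cast_nonneg _)
  obtain ⟨i, hi⟩ := hf.exists_gain_ge hα.le hS' hS
  refine ⟨i, ?_⟩
  have hfrac : (f S - φ) / (α * S'.card) ≤ f S - f (S ∪ {i}) := (div_le_iff₀' hc).2 hi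
  have hexp := add_one_le_exp (-(1 / (α * S'.card)))
  calc f (S ∪ {i}) - φ ≤ (1 - 1 / (α * S'.card)) * (f S - φ) := by
        rw [sub_mul, one_div_mul_eq_div, one_mul]; linarith
    _ ≤ exp (-(1 / (α * S'.card))) * (f S - φ) := by gcongr; linarith

theorem exists_superset_excess_le (hf : WeaklySupermodular α f) {S' : Finset (Fin n)} {φ : ℝ}
    (hS' : f S' ≤ φ) (hc : 0 < α * S'.card) (S₀ : Finset (Fin n)) (t : ℕ) :
    ∃ S, S₀ ⊆ S ∧ S.card ≤ S₀.card + t ∧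
      (f S ≤ φ ∨ f S - φ ≤ exp (-(t / (α * S'.card))) * (f S₀ - φ)) := by
  induction t with
  | zero => exact ⟨S₀, Subset.rfl, by simp, Or.inr (by simp)⟩
  | succ t ih =>
    obtain ⟨S, hS₀S, hcard, hS⟩ := ih
    by_cases hstop : f S ≤ φ
    · exact ⟨S, hS₀S, by omega, Or.inl hstop⟩
    have hexcess := hS.resolve_left hstop
    obtain ⟨i, hi⟩ := hf.exists_excess_le_exp_mul hS' hc (not_le.1 hstop)
    refine ⟨S ∪ {i}, hS₀S.trans subset_union_left, ?_, Or.inr ?_⟩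
    · have := card_union_le S {i}
      rw [card_singleton] at this
      omega
    · calc f (S ∪ {i}) - φ ≤ exp (-(1 / (α * S'.card))) * (f S - φ) := hi
        _ ≤ exp (-(1 / (α * S'.card))) * (exp (-(t / (α * S'.card))) * (f S₀ - φ)) := by
          gcongr
        _ = exp (-((t + 1 : ℕ) / (α * S'.card))) * (f S₀ - φ) := by
          rw [← mul_assoc, ← exp_add]; push_cast; ring_nf

end WeaklySupermodular

theorem exp_neg_div_mul_le_of_mul_log_div_le {a b c t : ℝ} (ha : 0 < a) (hb : 0 < b)
    (hc : 0 < c) (ht : c * log (a / b) ≤ t) : exp (-(t / c)) * a ≤ b := by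
  have hlog : log (a / b) ≤ t / c := (le_div_iff₀' hc).2 ht
  have hab : a / b ≤ exp (t / c) := (log_le_iff_le_exp (div_pos ha hb)).1 hlog
  rw [exp_neg, inv_mul_le_iff₀ (exp_pos _)]
  rwa [div_le_iff₀ hb] at hab

/-- Greedy extension with an alternative stopping criterion: if some set of cardinality
`k_f` achieves value at most `φ < φ_stop`, then a greedy extension of `S₀` with at most
`⌈α k_f ln(f S₀ / (φ_stop - φ))⌉` extra elements achieves value at most `φ_stop`. -/
theorem greedy_extension_stopping_criterion
    (n : ℕ) (α : ℝ) (hα : 1 ≤ α) (f : Finset (Fin n) → ℝ)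
    (hf : WeaklySupermodular α f)
    (φ φstop : ℝ) (hφ : 0 ≤ φ)
    (S₀ : Finset (Fin n)) (hlt : φ < φstop) (hstop : φstop ≤ f S₀)
    (kf : ℕ) (hkf : 1 ≤ kf)
    (hex : ∃ S' : Finset (Fin n), S'.card = kf ∧ f S' ≤ φ) :
    ∃ S : Finset (Fin n), S₀ ⊆ S ∧
      S.card ≤ S₀.card + ⌈α * (kf : ℝ) * Real.log (f S₀ / (φstop - φ))⌉₊ ∧
      f S ≤ φstop := by
  obtain ⟨S', rfl, hS'⟩ := hex
  have hc : 0 < α * S'.card := mul_pos (by linarith) (by exact_mod_cast hkf)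
  set N := ⌈α * S'.card * log (f S₀ / (φstop - φ))⌉₊
  obtain ⟨S, hS₀S, hcard, hS⟩ := hf.exists_superset_excess_le hS' hc S₀ N
  refine ⟨S, hS₀S, hcard, ?_⟩
  rcases hS with hS | hS
  · linarith
  have hdecay := exp_neg_div_mul_le_of_mul_log_div_le (by linarith) (sub_pos.2 hlt) hc
    (Nat.le_ceil (α * S'.card * log (f S₀ / (φstop - φ))))
  have : f S - φ ≤ φstop - φ :=
    calc f S - φ ≤ exp (-(N / (α * S'.card))) * (f S₀ - φ) := hS
      _ ≤ exp (-(N / (α * S'.card))) * f S₀ := by gcongr; linarith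
      _ ≤ φstop - φ := hdecay
  linarith
end

section
/- Let X be a finite set of points in ℝ^d (formally, x : Fin n → EuclideanSpace ℝ (Fin d)). For nonempty S ⊆ Fin n define the constrained k-means objective f(S) = Σ_{i ∈ Fin n} min_{j ∈ S} ‖x i - x j‖². Then f satisfies the weak-1-supermodularity inequality: for all nonempty S ⊆ Fin n and all T ⊆ Fin n with T \ S nonempty, f(S) - f(S ∪ T) ≤ |T \ S| · max_{i ∈ T \ S} (f(S) - f(S ∪ {i})). -/
/-! For each point `i`, the gain from adding `U` to the centre set `S` is
`(m - min_{j ∈ U} c i j)⁺` with `m` the current cost of `i`; it equals the gain of adding the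
best single `j ∈ U`, so it is at most the sum of the single-centre gains over `U`. Summing over
`i` bounds the gain of adding `T \ S` by the sum, hence by `|T \ S|` times the maximum, of the
gains of adding one of its points. -/

open Finset

section

variable {ι κ α : Type*} [AddCommGroup α] [LinearOrder α] [IsOrderedAddMonoid α]

theorem sub_min_inf'_le_sum_sub_min (a : α) {U : Finset κ} (hU : U.Nonempty) (g : κ → α) :
    a - min a (U.inf' hU g) ≤ ∑ j ∈ U, (a - min a (g j)) := by
  obtain ⟨j₀, hj₀, hmin⟩ := U.exists_mem_eq_inf' hU g
  rw [hmin]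
  exact single_le_sum (fun j _ => sub_nonneg.2 (min_le_left a (g j))) hj₀

theorem sub_union_le_sum_sub_union_singleton [Fintype ι] [DecidableEq κ] (c : ι → κ → α)
    (f : Finset κ → α) (hf : ∀ (S : Finset κ) (hS : S.Nonempty), f S = ∑ i, S.inf' hS (c i))
    {S U : Finset κ} (hS : S.Nonempty) (hU : U.Nonempty) :
    f S - f (S ∪ U) ≤ ∑ j ∈ U, (f S - f (S ∪ {j})) :=
  calc f S - f (S ∪ U)
      = ∑ i, (S.inf' hS (c i) - min (S.inf' hS (c i)) (U.inf' hU (c i))) := by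
        rw [hf S hS, hf _ (hS.mono subset_union_left), ← sum_sub_distrib]
        simp only [inf'_union hS hU]
    _ ≤ ∑ i, ∑ j ∈ U, (S.inf' hS (c i) - min (S.inf' hS (c i)) (c i j)) :=
        sum_le_sum fun i _ => sub_min_inf'_le_sum_sub_min _ hU (c i)
    _ = ∑ j ∈ U, (f S - f (S ∪ {j})) := by
        rw [sum_comm]
        refine sum_congr rfl fun j _ => ?_
        rw [hf S hS, hf _ (hS.mono subset_union_left), ← sum_sub_distrib]
        simp only [inf'_union hS (singleton_nonempty j), inf'_singleton]

end

/-- The constrained `k`-means objective `f S = Σ_i min_{j ∈ S} ‖x i - x j‖²` is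
weakly-1-supermodular: for nonempty `S` and `T \ S`,
`f S - f (S ∪ T) ≤ |T \ S| * max_{i ∈ T \ S} (f S - f (S ∪ {i}))`. -/
theorem kMeans_weakly_one_supermodular
    (n d : ℕ) (x : Fin n → EuclideanSpace ℝ (Fin d))
    (f : Finset (Fin n) → ℝ)
    (hf : ∀ (S : Finset (Fin n)) (hS : S.Nonempty),
      f S = ∑ i : Fin n, S.inf' hS (fun j => ‖x i - x j‖ ^ 2))
    (S T : Finset (Fin n)) (hS : S.Nonempty) (hTS : (T \ S).Nonempty) :
    f S - f (S ∪ T) ≤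
      ((T \ S).card : ℝ) * (T \ S).sup' hTS (fun i => f S - f (S ∪ {i})) := by
  rw [← union_sdiff_self_eq_union, ← nsmul_eq_mul]
  exact (sub_union_le_sum_sub_union_singleton (fun i j => ‖x i - x j‖ ^ 2) f hf hS hTS).trans
    (sum_le_card_nsmul _ _ _ fun j hj => le_sup' (fun i => f S - f (S ∪ {i})) hj)
end

section
/- Let x : Fin n → EuclideanSpace ℝ (Fin d) be a finite nonempty family of points (n ≥ 1) and let c ∈ EuclideanSpace ℝ (Fin d) be arbitrary. Then there exists an index j ∈ Fin n such that Σ_{i ∈ Fin n} ‖x i - x j‖² ≤ 2 · Σ_{i ∈ Fin n} ‖x i - c‖². -/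
/-! Averaging over the choice of `j`: summed over all `j`, the left-hand side equals
`2 n Σᵢ ‖x i - c‖² - 2 ‖Σᵢ (x i - c)‖²`, which is at most `n` times the right-hand side,
so some single `j` does at least as well as the average. -/

open Finset

section PairwiseDistances

variable {E : Type*} [NormedAddCommGroup E] [InnerProductSpace ℝ E] {ι : Type*} [Fintype ι]

theorem sum_sum_norm_sub_sq_eq (y : ι → E) :
    ∑ j, ∑ i, ‖y i - y j‖ ^ 2
      = 2 * Fintype.card ι * ∑ i, ‖y i‖ ^ 2 - 2 * ‖∑ i, y i‖ ^ 2 := by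
  have sum_inner_eq : ∑ j, ∑ i, inner ℝ (y i) (y j) = ‖∑ i, y i‖ ^ 2 := by
    rw [← real_inner_self_eq_norm_sq, inner_sum]
    simp only [sum_inner]
  simp only [norm_sub_sq_real, sum_sub_distrib, sum_add_distrib, sum_const, card_univ,
    nsmul_eq_mul, ← mul_sum, sum_inner_eq]
  ring

theorem sum_sum_norm_sub_sq_le (x : ι → E) (c : E) :
    ∑ j, ∑ i, ‖x i - x j‖ ^ 2 ≤ ∑ _j : ι, 2 * ∑ i, ‖x i - c‖ ^ 2 := by
  have h := sum_sum_norm_sub_sq_eq fun i ↦ x i - c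
  simp only [sub_sub_sub_cancel_right] at h
  rw [h, sum_const, card_univ, nsmul_eq_mul]
  nlinarith [sq_nonneg ‖∑ i, (x i - c)‖]

theorem exists_sum_norm_sub_sq_le_two_mul [Nonempty ι] (x : ι → E) (c : E) :
    ∃ j, ∑ i, ‖x i - x j‖ ^ 2 ≤ 2 * ∑ i, ‖x i - c‖ ^ 2 := by
  obtain ⟨j, -, hj⟩ := exists_le_of_sum_le univ_nonempty (sum_sum_norm_sub_sq_le x c)
  exact ⟨j, hj⟩

end PairwiseDistances

/-- For any finite nonempty family of points and any center `c`, some data point `x j`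
serves as a center at most twice as bad as `c`:
`Σ_i ‖x i - x j‖² ≤ 2 Σ_i ‖x i - c‖²`. -/
theorem exists_center_among_points
    (n d : ℕ) (hn : 1 ≤ n) (x : Fin n → EuclideanSpace ℝ (Fin d))
    (c : EuclideanSpace ℝ (Fin d)) :
    ∃ j : Fin n, ∑ i : Fin n, ‖x i - x j‖ ^ 2 ≤ 2 * ∑ i : Fin n, ‖x i - c‖ ^ 2 :=
  have : Nonempty (Fin n) := ⟨⟨0, hn⟩⟩
  exists_sum_norm_sub_sq_le_two_mul x c
end

section
/- Let x_1, …, x_n ∈ ℝ^m be unit vectors that are α-well-conditioned for some α ≥ 1, and let y_1, …, y_ℓ ∈ ℝ^m. Define the sparse multiple linear regression objective f(S) = Σ_{j=1}^ℓ dist(y_j, span{x_i : i ∈ S})². Then f is weakly-α-supermodular: f is nonnegative, nonincreasing, and for all S, T ⊆ Fin n with T \ S nonempty, f(S) - f(S ∪ T) ≤ α · |T \ S| · max_{i ∈ T \ S} (f(S) - f(S ∪ {i})). -/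
/-!
The gain `f S - f U` of enlarging `S` to `U` is `Σ_j ‖P_U y_j - P_S y_j‖²`, by Pythagoras for the
nested projections. With `b_j = y_j - P_S y_j`, adding a single unit vector `x_i` gains at least
`Σ_j ⟪b_j, x_i⟫²`. Conversely, write `c_j = P_{S ∪ T} y_j - P_S y_j = Σ_i w_i x_i`: since `b_j` is
orthogonal to every `x_i` with `i ∈ S`, `‖c_j‖² = ⟪b_j, c_j⟫ = Σ_{i ∈ T \ S} w_i ⟪b_j, x_i⟫`, and
Cauchy–Schwarz together with `Σ w_i² ≤ α ‖c_j‖²` gives `‖c_j‖² ≤ α Σ_{i ∈ T \ S} ⟪b_j, x_i⟫²`.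
Summing over `j` bounds the total gain by `α |T \ S|` times the best single gain.
-/

open Metric Submodule Finset
open scoped RealInnerProductSpace

variable {E ι κ : Type*} [NormedAddCommGroup E] [InnerProductSpace ℝ E]

instance (x : ι → E) (S : Finset ι) : (span ℝ (x '' S)).HasOrthogonalProjection :=
  have : FiniteDimensional ℝ (span ℝ (x '' S)) :=
    FiniteDimensional.span_of_finite ℝ (S.finite_toSet.image x)
  inferInstance

namespace Submodule

theorem infDist_eq_norm_sub_starProjection (K : Submodule ℝ E) [K.HasOrthogonalProjection]
    (y : E) : infDist y K = ‖y - K.starProjection y‖ := by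
  rw [infDist_eq_iInf, starProjection_minimal]
  simp_rw [dist_eq_norm]
  rfl

variable {K K' : Submodule ℝ E} [K.HasOrthogonalProjection] [K'.HasOrthogonalProjection]

theorem inner_sub_starProjection_eq (y : E) {v : E} (hv : v ∈ K') :
    ⟪y - K.starProjection y, v⟫ = ⟪K'.starProjection y - K.starProjection y, v⟫ := by
  have hperp : ⟪y - K'.starProjection y, v⟫ = 0 :=
    (mem_orthogonal' K' _).mp (sub_starProjection_mem_orthogonal y) v hv
  rw [← sub_add_sub_cancel y (K'.starProjection y), inner_add_left, hperp, zero_add]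

theorem infDist_sq_eq_add_of_le (h : K ≤ K') (y : E) :
    infDist y K ^ 2 = infDist y K' ^ 2 + ‖K'.starProjection y - K.starProjection y‖ ^ 2 := by
  have hperp : ⟪y - K'.starProjection y, K'.starProjection y - K.starProjection y⟫ = 0 :=
    (mem_orthogonal' K' _).mp (sub_starProjection_mem_orthogonal y) _
      (sub_mem (K'.starProjection_apply_mem y) (h (K.starProjection_apply_mem y)))
  rw [infDist_eq_norm_sub_starProjection, infDist_eq_norm_sub_starProjection,
    ← sub_add_sub_cancel y (K'.starProjection y), norm_add_sq_real, hperp]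
  ring

theorem inner_sub_starProjection_sq_le (y : E) {v : E} (hv : v ∈ K') (hv₁ : ‖v‖ ≤ 1) :
    ⟪y - K.starProjection y, v⟫ ^ 2 ≤ ‖K'.starProjection y - K.starProjection y‖ ^ 2 := by
  rw [inner_sub_starProjection_eq y hv, ← sq_abs]
  gcongr
  calc _ ≤ ‖K'.starProjection y - K.starProjection y‖ * ‖v‖ := abs_real_inner_le_norm _ _
    _ ≤ ‖K'.starProjection y - K.starProjection y‖ := mul_le_of_le_one_right (norm_nonneg _) hv₁

end Submodule

def WellConditioned (α : ℝ) (x : ι → E) : Prop :=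
  ∀ (S : Finset ι) (w : ι → ℝ), (∀ i ∉ S, w i = 0) →
    (1 / α) * ∑ i ∈ S, w i ^ 2 ≤ ‖∑ i ∈ S, w i • x i‖ ^ 2

namespace WellConditioned

variable {α : ℝ} {x : ι → E}

theorem sum_sq_le (hx : WellConditioned α x) (hα : 0 < α) (S : Finset ι) (w : ι → ℝ) :
    ∑ i ∈ S, w i ^ 2 ≤ α * ‖∑ i ∈ S, w i • x i‖ ^ 2 := by
  classical
  have hS := hx S (fun i => if i ∈ S then w i else 0) fun i hi => if_neg hi
  have hsq : ∑ i ∈ S, (if i ∈ S then w i else 0) ^ 2 = ∑ i ∈ S, w i ^ 2 :=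
    sum_congr rfl fun i hi => by rw [if_pos hi]
  have hsmul : ∑ i ∈ S, (if i ∈ S then w i else 0) • x i = ∑ i ∈ S, w i • x i :=
    sum_congr rfl fun i hi => by rw [if_pos hi]
  rwa [hsq, hsmul, one_div, inv_mul_le_iff₀ hα] at hS

theorem norm_sq_starProjection_sub_le [DecidableEq ι] (hx : WellConditioned α x) (hα : 0 < α)
    (S T : Finset ι) (y : E) :
    ‖(span ℝ (x '' ↑(S ∪ T))).starProjection y - (span ℝ (x '' ↑S)).starProjection y‖ ^ 2 ≤
      α * ∑ i ∈ T \ S, ⟪y - (span ℝ (x '' ↑S)).starProjection y, x i⟫ ^ 2 := by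
  set K := span ℝ (x '' ↑S)
  set K' := span ℝ (x '' ↑(S ∪ T))
  set b := y - K.starProjection y
  set c := K'.starProjection y - K.starProjection y
  have hKK' : K ≤ K' := span_mono (Set.image_mono (by simp))
  have hc : c ∈ K' := sub_mem (K'.starProjection_apply_mem y) (hKK' (K.starProjection_apply_mem y))
  obtain ⟨w, hw⟩ := (mem_span_image_finset_iff_exists_fun' ℝ).mp hc
  have hbS : ∀ i ∈ S, ⟪b, x i⟫ = 0 := fun i hi =>
    (mem_orthogonal' K _).mp (sub_starProjection_mem_orthogonal y) _
      (subset_span (Set.mem_image_of_mem x hi))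
  have hnorm : ‖c‖ ^ 2 = ∑ i ∈ T \ S, w i * ⟪b, x i⟫ :=
    calc ‖c‖ ^ 2 = ⟪b, c⟫ := by
          rw [inner_sub_starProjection_eq y hc, real_inner_self_eq_norm_sq]
      _ = ∑ i ∈ S ∪ T, w i * ⟪b, x i⟫ := by
          simp only [← hw, inner_sum, real_inner_smul_right]
      _ = ∑ i ∈ T \ S, w i * ⟪b, x i⟫ := by
          rw [← union_sdiff_self_eq_union, sum_union disjoint_sdiff,
            sum_eq_zero fun i hi => by rw [hbS i hi, mul_zero], zero_add]
  have hw_le : ∑ i ∈ T \ S, w i ^ 2 ≤ α * ‖c‖ ^ 2 :=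
    calc _ ≤ ∑ i ∈ S ∪ T, w i ^ 2 :=
          sum_le_sum_of_subset_of_nonneg (sdiff_subset.trans subset_union_right)
            fun _ _ _ => sq_nonneg _
      _ ≤ α * ‖c‖ ^ 2 := hw ▸ hx.sum_sq_le hα _ w
  have hsq : (‖c‖ ^ 2) ^ 2 ≤ α * ‖c‖ ^ 2 * ∑ i ∈ T \ S, ⟪b, x i⟫ ^ 2 :=
    calc (‖c‖ ^ 2) ^ 2 = (∑ i ∈ T \ S, w i * ⟪b, x i⟫) ^ 2 := by rw [hnorm]
      _ ≤ (∑ i ∈ T \ S, w i ^ 2) * ∑ i ∈ T \ S, ⟪b, x i⟫ ^ 2 := sum_mul_sq_le_sq_mul_sq _ _ _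
      _ ≤ α * ‖c‖ ^ 2 * ∑ i ∈ T \ S, ⟪b, x i⟫ ^ 2 := by gcongr
  have : 0 ≤ α * ∑ i ∈ T \ S, ⟪b, x i⟫ ^ 2 := by positivity
  nlinarith [sq_nonneg ‖c‖]

end WellConditioned

noncomputable def regressionObjective [Fintype κ] (x : ι → E) (y : κ → E) (S : Finset ι) : ℝ :=
  ∑ j, infDist (y j) (span ℝ (x '' ↑S) : Set E) ^ 2

section regressionObjective

variable [Fintype κ] (x : ι → E) (y : κ → E)

theorem regressionObjective_nonneg (S : Finset ι) : 0 ≤ regressionObjective x y S := by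
  unfold regressionObjective
  positivity

theorem regressionObjective_sub_of_subset {S U : Finset ι} (h : S ⊆ U) :
    regressionObjective x y S - regressionObjective x y U =
      ∑ j, ‖(span ℝ (x '' ↑U)).starProjection (y j) -
        (span ℝ (x '' ↑S)).starProjection (y j)‖ ^ 2 := by
  rw [regressionObjective, regressionObjective, ← sum_sub_distrib]
  refine sum_congr rfl fun j _ => ?_
  rw [infDist_sq_eq_add_of_le (span_mono (Set.image_mono (coe_subset.mpr h)))]
  ring

theorem regressionObjective_antitone : Antitone (regressionObjective x y) := fun S U h =>
  sub_nonneg.mp <| by rw [regressionObjective_sub_of_subset x y h]; positivity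

theorem sum_inner_sq_le_regressionObjective_sub [DecidableEq ι] (S : Finset ι) {i : ι}
    (hxi : ‖x i‖ ≤ 1) :
    ∑ j, ⟪y j - (span ℝ (x '' ↑S)).starProjection (y j), x i⟫ ^ 2 ≤
      regressionObjective x y S - regressionObjective x y (S ∪ {i}) := by
  rw [regressionObjective_sub_of_subset x y subset_union_left]
  exact sum_le_sum fun j _ =>
    inner_sub_starProjection_sq_le (y j) (subset_span ⟨i, by simp, rfl⟩) hxi

theorem WellConditioned.regressionObjective_sub_union_le [DecidableEq ι] {α : ℝ}
    (hx : WellConditioned α x) (hα : 0 < α) (S T : Finset ι) :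
    regressionObjective x y S - regressionObjective x y (S ∪ T) ≤
      α * ∑ i ∈ T \ S, ∑ j, ⟪y j - (span ℝ (x '' ↑S)).starProjection (y j), x i⟫ ^ 2 := by
  rw [regressionObjective_sub_of_subset x y subset_union_left, sum_comm, mul_sum]
  exact sum_le_sum fun j _ => hx.norm_sq_starProjection_sub_le hα S T (y j)

end regressionObjective

/-- The sparse multiple linear regression objective
`f S = Σ_j dist(y j, span {x i : i ∈ S})²` for unit vectors `x i` that are
`α`-well-conditioned is weakly-`α`-supermodular. -/
theorem smlr_weakly_supermodular
    (m n ℓ : ℕ) (α : ℝ) (hα : 1 ≤ α)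
    (x : Fin n → EuclideanSpace ℝ (Fin m)) (hx : ∀ i, ‖x i‖ = 1)
    (hcond : ∀ (S : Finset (Fin n)) (w : Fin n → ℝ), (∀ i ∉ S, w i = 0) →
      (1 / α) * ∑ i ∈ S, (w i) ^ 2 ≤ ‖∑ i ∈ S, w i • x i‖ ^ 2)
    (y : Fin ℓ → EuclideanSpace ℝ (Fin m))
    (f : Finset (Fin n) → ℝ)
    (hf : ∀ S : Finset (Fin n), f S = ∑ j : Fin ℓ,
      (Metric.infDist (y j)
        (Submodule.span ℝ (x '' ↑S) : Set (EuclideanSpace ℝ (Fin m)))) ^ 2) :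
    (∀ S : Finset (Fin n), 0 ≤ f S) ∧
    (∀ S T : Finset (Fin n), S ⊆ T → f T ≤ f S) ∧
    (∀ (S T : Finset (Fin n)) (h : (T \ S).Nonempty),
      f S - f (S ∪ T) ≤
        α * ((T \ S).card : ℝ) * (T \ S).sup' h (fun i => f S - f (S ∪ {i}))) := by
  obtain rfl : f = regressionObjective x y := funext hf
  refine ⟨regressionObjective_nonneg x y, fun S T h => regressionObjective_antitone x y h,
    fun S T hne => ?_⟩
  calc _ ≤ α * ∑ i ∈ T \ S, ∑ j, ⟪y j - (span ℝ (x '' ↑S)).starProjection (y j), x i⟫ ^ 2 :=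
        WellConditioned.regressionObjective_sub_union_le x y hcond (by linarith) S T
    _ ≤ α * ∑ _i ∈ T \ S, (T \ S).sup' hne fun i =>
          regressionObjective x y S - regressionObjective x y (S ∪ {i}) := by
        gcongr with i hi
        exact (sum_inner_sq_le_regressionObjective_sub x y S (hx i).le).trans
          (le_sup' (fun i => regressionObjective x y S - regressionObjective x y (S ∪ {i})) hi)
    _ = _ := by rw [sum_const, nsmul_eq_mul]; ring
end

section
/- Let x_1, …, x_n ∈ ℝ^m be unit vectors, let S, T ⊆ Fin n, let P denote the orthogonal projection onto W = span{x_j : j ∈ S}, and suppose (I − P) x_i ≠ 0 for every i ∈ T \ S; set z_i = (I − P) x_i / ‖(I − P) x_i‖ for i ∈ T \ S. If σ > 0 satisfies ‖Σ_{i ∈ S ∪ T} v_i x_i‖ ≥ σ · ‖v‖ for every coefficient vector v supported on S ∪ T, then for every coefficient vector w supported on T \ S, ‖Σ_{i ∈ T \ S} w_i z_i‖ ≥ σ · ‖w‖. -/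
/-!
Write `P` for the orthogonal projection onto `span {x j : j ∈ S}` and `c i = ‖x i - P (x i)‖⁻¹`.
Each `P (x i)` is a combination of the `x j`, `j ∈ S`, so `∑ w i • z i = ∑ (w i * c i) • (x i - P (x i))`
is `∑_{S ∪ T} v i • x i` for a coefficient vector `v` that agrees with `w i * c i` on `T \ S`.
Since `‖x i - P (x i)‖ ≤ ‖x i‖ = 1`, every `c i ≥ 1`, so `‖v‖ ≥ ‖w‖` and the hypothesis on the
`x i` gives `σ ‖w‖ ≤ σ ‖v‖ ≤ ‖∑ w i • z i‖`.
-/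

open Finset

theorem Submodule.norm_sub_starProjection_le {E : Type*} [NormedAddCommGroup E]
    [InnerProductSpace ℝ E] (K : Submodule ℝ E) [K.HasOrthogonalProjection] (x : E) :
    ‖x - K.starProjection x‖ ≤ ‖x‖ := by
  rw [← starProjection_orthogonal_val]
  exact Kᗮ.norm_starProjection_apply_le x

theorem Finset.sum_sq_le_sum_sq_of_subset_of_abs_le {ι R : Type*} [Ring R] [LinearOrder R]
    [IsStrictOrderedRing R] {A B : Finset ι} (hAB : A ⊆ B) {w v : ι → R}
    (hwv : ∀ i ∈ A, |w i| ≤ |v i|) :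
    ∑ i ∈ A, w i ^ 2 ≤ ∑ i ∈ B, v i ^ 2 :=
  calc ∑ i ∈ A, w i ^ 2 ≤ ∑ i ∈ A, v i ^ 2 := sum_le_sum fun i hi => sq_le_sq.2 (hwv i hi)
    _ ≤ ∑ i ∈ B, v i ^ 2 := sum_le_sum_of_subset_of_nonneg hAB fun i _ _ => sq_nonneg (v i)

theorem Submodule.exists_sum_smul_eq_sum_smul_sub_of_mem_span {ι R E : Type*} [DecidableEq ι]
    [Ring R] [AddCommGroup E] [Module R E] {S A : Finset ι} (hSA : Disjoint S A)
    (x y : ι → E) (b : ι → R) (hy : ∀ i ∈ A, y i ∈ span R (x '' S)) :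
    ∃ v : ι → R, (∀ i ∈ A, v i = b i) ∧ (∀ i ∉ S ∪ A, v i = 0) ∧
      ∑ i ∈ S ∪ A, v i • x i = ∑ i ∈ A, b i • (x i - y i) := by
  have hmem : ∑ i ∈ A, b i • y i ∈ span R (x '' S) := sum_smul_mem _ b hy
  obtain ⟨l, hl⟩ := (mem_span_image_finset_iff_exists_fun' R).1 hmem
  set v : ι → R := fun i => if i ∈ A then b i else if i ∈ S then -l i else 0
  have hvS : ∀ i ∈ S, v i = -l i := fun i hi => by
    simp only [v, if_neg (disjoint_left.1 hSA hi), if_pos hi]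
  have hvA : ∀ i ∈ A, v i = b i := fun i hi => if_pos hi
  refine ⟨v, hvA, fun i hi => ?_, ?_⟩
  · rw [mem_union, not_or] at hi
    simp only [v, if_neg hi.1, if_neg hi.2]
  · calc ∑ i ∈ S ∪ A, v i • x i = ∑ i ∈ S, v i • x i + ∑ i ∈ A, v i • x i := sum_union hSA
      _ = -∑ i ∈ A, b i • y i + ∑ i ∈ A, b i • x i := by
        rw [← hl, ← sum_neg_distrib]
        congr 1 <;> refine sum_congr rfl fun i hi => ?_
        · rw [hvS i hi, neg_smul]
        · rw [hvA i hi]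
      _ = ∑ i ∈ A, b i • (x i - y i) := by
        simp only [smul_sub, sum_sub_distrib]
        abel

theorem projected_columns_smallest_singular_value_general
    (m n : ℕ) (x : Fin n → EuclideanSpace ℝ (Fin m)) (hx : ∀ i, ‖x i‖ = 1)
    (S T : Finset (Fin n))
    (W : Submodule ℝ (EuclideanSpace ℝ (Fin m)))
    (hW : W = Submodule.span ℝ (x '' ↑S))
    (hproj : ∀ i ∈ T \ S,
      x i - (W.orthogonalProjectionOnto (x i) : EuclideanSpace ℝ (Fin m)) ≠ 0)
    (z : Fin n → EuclideanSpace ℝ (Fin m))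
    (hz : ∀ i ∈ T \ S,
      z i = ‖x i - (W.orthogonalProjectionOnto (x i) : EuclideanSpace ℝ (Fin m))‖⁻¹ •
        (x i - (W.orthogonalProjectionOnto (x i) : EuclideanSpace ℝ (Fin m))))
    (σ : ℝ) (hσ : 0 < σ)
    (hcond : ∀ v : Fin n → ℝ, (∀ i ∉ S ∪ T, v i = 0) →
      σ * Real.sqrt (∑ i ∈ S ∪ T, (v i) ^ 2) ≤ ‖∑ i ∈ S ∪ T, v i • x i‖)
    (w : Fin n → ℝ) :
    σ * Real.sqrt (∑ i ∈ T \ S, (w i) ^ 2) ≤ ‖∑ i ∈ T \ S, w i • z i‖ := by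
  set c : Fin n → ℝ := fun i => ‖x i - W.starProjection (x i)‖⁻¹
  have hc : ∀ i ∈ T \ S, 1 ≤ c i := fun i hi =>
    (one_le_inv₀ (norm_pos_iff.2 (hproj i hi))).2 (hx i ▸ W.norm_sub_starProjection_le (x i))
  obtain ⟨v, hvw, hv0, hvx⟩ := Submodule.exists_sum_smul_eq_sum_smul_sub_of_mem_span
    disjoint_sdiff x (fun i => W.starProjection (x i)) (fun i => w i * c i)
    fun i _ => by rw [← hW]; exact W.starProjection_apply_mem (x i)
  rw [union_sdiff_self_eq_union] at hv0 hvx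
  have hwz : ∑ i ∈ T \ S, w i • z i = ∑ i ∈ S ∪ T, v i • x i := by
    rw [hvx]
    exact sum_congr rfl fun i hi => by rw [hz i hi, smul_smul]; rfl
  have hwv : ∑ i ∈ T \ S, w i ^ 2 ≤ ∑ i ∈ S ∪ T, v i ^ 2 :=
    sum_sq_le_sum_sq_of_subset_of_abs_le (sdiff_subset.trans subset_union_right) fun i hi => by
      rw [hvw i hi, abs_mul]
      exact le_mul_of_one_le_right (abs_nonneg _) ((hc i hi).trans (le_abs_self _))
  rw [hwz]
  exact (mul_le_mul_of_nonneg_left (Real.sqrt_le_sqrt hwv) hσ.le).trans (hcond v hv0)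

/-- Projecting the columns `x i`, `i ∈ T \ S`, away from `span {x j : j ∈ S}` and
renormalizing does not decrease the smallest singular value: if
`‖Σ_{i ∈ S ∪ T} v i • x i‖ ≥ σ ‖v‖` for all `v` supported on `S ∪ T`, then
`‖Σ_{i ∈ T \ S} w i • z i‖ ≥ σ ‖w‖` for all `w` supported on `T \ S`. -/
theorem projected_columns_smallest_singular_value
    (m n : ℕ) (x : Fin n → EuclideanSpace ℝ (Fin m)) (hx : ∀ i, ‖x i‖ = 1)
    (S T : Finset (Fin n))
    (W : Submodule ℝ (EuclideanSpace ℝ (Fin m)))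
    (hW : W = Submodule.span ℝ (x '' ↑S))
    (hproj : ∀ i ∈ T \ S,
      x i - (W.orthogonalProjectionOnto (x i) : EuclideanSpace ℝ (Fin m)) ≠ 0)
    (z : Fin n → EuclideanSpace ℝ (Fin m))
    (hz : ∀ i ∈ T \ S,
      z i = ‖x i - (W.orthogonalProjectionOnto (x i) : EuclideanSpace ℝ (Fin m))‖⁻¹ •
        (x i - (W.orthogonalProjectionOnto (x i) : EuclideanSpace ℝ (Fin m))))
    (σ : ℝ) (hσ : 0 < σ)
    (hcond : ∀ v : Fin n → ℝ, (∀ i ∉ S ∪ T, v i = 0) →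
      σ * Real.sqrt (∑ i ∈ S ∪ T, (v i) ^ 2) ≤ ‖∑ i ∈ S ∪ T, v i • x i‖)
    (w : Fin n → ℝ) (hw : ∀ i ∉ T \ S, w i = 0) :
    σ * Real.sqrt (∑ i ∈ T \ S, (w i) ^ 2) ≤ ‖∑ i ∈ T \ S, w i • z i‖ :=
  projected_columns_smallest_singular_value_general m n x hx S T W hW hproj z hz σ hσ hcond w
end

section
/- Let x_1, …, x_n ∈ ℝ^m be unit vectors that are α-well-conditioned for some α ≥ 1, let y ∈ ℝ^m with y ≠ 0, define f(S) = dist(y, span{x_i : i ∈ S})², and let E be a real with 0 < E ≤ ‖y‖². Let k ≥ 1 and suppose there exists S* ⊆ Fin n with |S*| ≤ k and f(S*) ≤ E/4. Then there exists S ⊆ Fin n with |S| ≤ ⌈α · k · ln( ‖y‖² / (E − E/4) )⌉ and f(S) ≤ E. -/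
/-!
Let `z` be the orthogonal projection of `y` onto the span of the current support `S`, and `u` a
best approximation of `y` from the span of `S*`. As `y - z ⊥ span S`, the gap
`‖y - z‖² - f S* = 2 ⟪y - z, u - z⟫ - ‖u - z‖²` only sees the coefficients of `u - z` on `S* \ S`,
so well-conditioning and Cauchy–Schwarz bound it by `α k max_{i ∈ S* \ S} ⟪y - z, x i⟫²`, while
adding that `x i` to `S` lowers `f` by `⟪y - z, x i⟫²`. Each greedy step thus shrinks `f S - f S*`
by a factor `1 - 1/(α k) ≤ exp (-1/(α k))`, and after `⌈α k log (‖y‖² / (3E/4))⌉` steps the gap is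
at most `3E/4`.
-/

open Finset Submodule RealInnerProductSpace

theorem exists_card_le_sub_le_mul_pow {ι : Type*} [DecidableEq ι] {g : Finset ι → ℝ}
    {c q D : ℝ} (hq : 0 ≤ q) (hD : 0 ≤ D) (hempty : g ∅ - c ≤ D)
    (hstep : ∀ S, c < g S → ∃ i, g (insert i S) - c ≤ q * (g S - c)) (t : ℕ) :
    ∃ S : Finset ι, #S ≤ t ∧ g S - c ≤ D * q ^ t := by
  induction t with
  | zero => exact ⟨∅, by simp, by simpa using hempty⟩
  | succ t ih =>
    obtain ⟨S, hcard, hS⟩ := ih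
    by_cases hgap : c < g S
    · obtain ⟨i, hi⟩ := hstep S hgap
      refine ⟨insert i S, (card_insert_le i S).trans (by omega), ?_⟩
      calc g (insert i S) - c ≤ q * (g S - c) := hi
        _ ≤ q * (D * q ^ t) := by gcongr
        _ = D * q ^ (t + 1) := by ring
    · exact ⟨S, hcard.trans t.le_succ, by nlinarith [pow_nonneg hq (t + 1)]⟩

theorem mul_one_sub_inv_pow_le {a b K : ℝ} {t : ℕ} (hb : 0 < b) (hK : 1 ≤ K)
    (ht : K * Real.log (a / b) ≤ t) : a * (1 - K⁻¹) ^ t ≤ b := by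
  have hK0 : 0 < K := by linarith
  have hq : 0 ≤ 1 - K⁻¹ := sub_nonneg.2 (inv_le_one_of_one_le₀ hK)
  have hpow : (1 - K⁻¹) ^ t ≤ Real.exp (-(t / K)) := by
    calc (1 - K⁻¹) ^ t ≤ Real.exp (-K⁻¹) ^ t := by
          gcongr
          linarith [Real.add_one_le_exp (-K⁻¹)]
      _ = Real.exp (-(t / K)) := by rw [← Real.exp_nat_mul]; ring_nf
  have hlog : Real.log (a / b) ≤ t / K := by rwa [le_div_iff₀ hK0, mul_comm]
  calc a * (1 - K⁻¹) ^ t ≤ b * Real.exp (Real.log (a / b)) * Real.exp (-(t / K)) := by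
        gcongr
        rw [← div_le_iff₀' hb]
        exact Real.le_exp_log _
    _ = b * Real.exp (Real.log (a / b) - t / K) := by rw [mul_assoc, ← Real.exp_add]; ring_nf
    _ ≤ b * Real.exp 0 := by gcongr; linarith
    _ = b := by simp

section SparseRegression

variable {ι F : Type*} [NormedAddCommGroup F] [InnerProductSpace ℝ F]

noncomputable def sparseObjective (x : ι → F) (y : F) (S : Finset ι) : ℝ :=
  Metric.infDist y (span ℝ (x '' ↑S) : Set F) ^ 2

def IsWellConditioned (α : ℝ) (x : ι → F) : Prop :=
  ∀ (S : Finset ι) (w : ι → ℝ), (∀ i ∉ S, w i = 0) →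
    (1 / α) * ∑ i ∈ S, w i ^ 2 ≤ ‖∑ i ∈ S, w i • x i‖ ^ 2

variable {x : ι → F} {y z : F} {S : Finset ι}

theorem sparseObjective_nonneg (x : ι → F) (y : F) (S : Finset ι) :
    0 ≤ sparseObjective x y S :=
  sq_nonneg _

theorem sparseObjective_le_of_mem (hz : z ∈ span ℝ (x '' ↑S)) :
    sparseObjective x y S ≤ ‖y - z‖ ^ 2 := by
  have := Metric.infDist_le_dist_of_mem (x := y) (SetLike.mem_coe.2 hz)
  rw [dist_eq_norm] at this
  exact pow_le_pow_left₀ Metric.infDist_nonneg this 2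

theorem sparseObjective_empty_le (x : ι → F) (y : F) : sparseObjective x y ∅ ≤ ‖y‖ ^ 2 := by
  simpa using sparseObjective_le_of_mem (x := x) (y := y) (S := ∅) (zero_mem _)

theorem exists_sparseObjective_eq_norm_sub_sq (x : ι → F) (y : F) (S : Finset ι) :
    ∃ z ∈ span ℝ (x '' ↑S),
      sparseObjective x y S = ‖y - z‖ ^ 2 ∧ ∀ i ∈ S, ⟪y - z, x i⟫ = 0 := by
  have : FiniteDimensional ℝ (span ℝ (x '' ↑S)) :=
    FiniteDimensional.span_of_finite ℝ (S.finite_toSet.image x)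
  set U := span ℝ (x '' ↑S)
  refine ⟨U.starProjection y, U.starProjection_apply_mem y, ?_, fun i hi =>
    U.starProjection_inner_eq_zero y (x i) (subset_span ⟨i, hi, rfl⟩)⟩
  rw [sparseObjective, Metric.infDist_eq_iInf, U.starProjection_minimal]
  simp_rw [dist_eq_norm]
  rfl

theorem sparseObjective_insert_le [DecidableEq ι] {i : ι} (hz : z ∈ span ℝ (x '' ↑S))
    (hxi : ‖x i‖ = 1) :
    sparseObjective x y (insert i S) ≤ ‖y - z‖ ^ 2 - ⟪y - z, x i⟫ ^ 2 := by
  set c := ⟪y - z, x i⟫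
  have hmem : z + c • x i ∈ span ℝ (x '' ↑(insert i S)) := by
    refine add_mem (span_mono (Set.image_mono ?_) hz) (smul_mem _ _ (subset_span ⟨i, ?_, rfl⟩))
    · simp
    · simp
  calc sparseObjective x y (insert i S) ≤ ‖(y - z) - c • x i‖ ^ 2 := by
        simpa only [sub_sub] using sparseObjective_le_of_mem hmem
    _ = ‖y - z‖ ^ 2 - c ^ 2 := by
        rw [norm_sub_sq_real, real_inner_smul_right, norm_smul, hxi, Real.norm_eq_abs, mul_one,
          sq_abs]
        ring

theorem IsWellConditioned.exists_sum_smul_eq {α : ℝ} (hx : IsWellConditioned α x) (hα : 0 < α)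
    {v : F} (hv : v ∈ span ℝ (x '' ↑S)) :
    ∃ w : ι → ℝ, ∑ i ∈ S, w i • x i = v ∧ ∑ i ∈ S, w i ^ 2 ≤ α * ‖v‖ ^ 2 := by
  obtain ⟨l, hl, rfl⟩ := (Finsupp.mem_span_image_iff_linearCombination ℝ).1 hv
  have hsupp : l.support ⊆ S := by exact_mod_cast (Finsupp.mem_supported ℝ l).1 hl
  have hsum : ∑ i ∈ S, l i • x i = Finsupp.linearCombination ℝ x l := by
    rw [Finsupp.linearCombination_apply, Finsupp.sum_of_support_subset l hsupp _ (by simp)]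
  refine ⟨l, hsum, ?_⟩
  have := hx S l fun i hi => Finsupp.notMem_support_iff.1 fun h => hi (hsupp h)
  rwa [hsum, one_div, inv_mul_le_iff₀ hα] at this

theorem IsWellConditioned.inner_sq_le {α : ℝ} (hx : IsWellConditioned α x) (hα : 0 < α)
    [DecidableEq ι] {T : Finset ι} {r d : F} (hr : ∀ i ∈ S, ⟪r, x i⟫ = 0)
    (hd : d ∈ span ℝ (x '' ↑(S ∪ T))) :
    ⟪r, d⟫ ^ 2 ≤ α * ‖d‖ ^ 2 * ∑ i ∈ T \ S, ⟪r, x i⟫ ^ 2 := by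
  obtain ⟨w, rfl, hw⟩ := hx.exists_sum_smul_eq hα hd
  have hTS : T \ S ⊆ S ∪ T := sdiff_subset.trans subset_union_right
  have hinner : ⟪r, ∑ i ∈ S ∪ T, w i • x i⟫ = ∑ i ∈ T \ S, w i * ⟪r, x i⟫ := by
    simp only [inner_sum, real_inner_smul_right]
    refine (sum_subset hTS fun i hi hiTS => ?_).symm
    have hiS : i ∈ S := by grind
    rw [hr i hiS, mul_zero]
  rw [hinner]
  calc (∑ i ∈ T \ S, w i * ⟪r, x i⟫) ^ 2
      ≤ (∑ i ∈ T \ S, w i ^ 2) * ∑ i ∈ T \ S, ⟪r, x i⟫ ^ 2 := sum_mul_sq_le_sq_mul_sq _ _ _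
    _ ≤ α * ‖∑ i ∈ S ∪ T, w i • x i‖ ^ 2 * ∑ i ∈ T \ S, ⟪r, x i⟫ ^ 2 := by
      gcongr
      exact (sum_le_sum_of_subset_of_nonneg hTS fun i _ _ => sq_nonneg _).trans hw

theorem IsWellConditioned.norm_sub_sq_sub_sparseObjective_le {α : ℝ}
    (hx : IsWellConditioned α x) (hα : 0 < α) [DecidableEq ι] (T : Finset ι)
    (hz : z ∈ span ℝ (x '' ↑S)) (horth : ∀ i ∈ S, ⟪y - z, x i⟫ = 0) :
    ‖y - z‖ ^ 2 - sparseObjective x y T ≤ α * ∑ i ∈ T \ S, ⟪y - z, x i⟫ ^ 2 := by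
  obtain ⟨u, hu, hT, -⟩ := exists_sparseObjective_eq_norm_sub_sq x y T
  have hd : u - z ∈ span ℝ (x '' ↑(S ∪ T)) := by
    rw [coe_union, Set.image_union, span_union]
    exact sub_mem (mem_sup_right hu) (mem_sup_left hz)
  have hCS := hx.inner_sq_le hα horth hd
  have hexpand : ‖y - u‖ ^ 2 = ‖y - z‖ ^ 2 - 2 * ⟪y - z, u - z⟫ + ‖u - z‖ ^ 2 := by
    rw [← norm_sub_sq_real, sub_sub_sub_cancel_right]
  have hsum : 0 ≤ α * ∑ i ∈ T \ S, ⟪y - z, x i⟫ ^ 2 := by positivity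
  -- the gap is `2 c - D` with `c² ≤ K D` and `K, D ≥ 0`, hence at most `K` (AM-GM)
  rw [hT, hexpand]
  nlinarith [sq_nonneg (α * ∑ i ∈ T \ S, ⟪y - z, x i⟫ ^ 2 - ‖u - z‖ ^ 2),
    sq_nonneg (⟪y - z, u - z⟫ - ‖u - z‖ ^ 2)]

theorem IsWellConditioned.exists_sparseObjective_insert_le {α : ℝ}
    (hx : IsWellConditioned α x) (hα : 0 < α) (hunit : ∀ i, ‖x i‖ = 1) [DecidableEq ι]
    {T : Finset ι} {k : ℕ} (hT : #T ≤ k)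
    (hgap : sparseObjective x y T < sparseObjective x y S) :
    ∃ i, sparseObjective x y (insert i S) - sparseObjective x y T ≤
      (1 - (α * k)⁻¹) * (sparseObjective x y S - sparseObjective x y T) := by
  obtain ⟨z, hz, hS, horth⟩ := exists_sparseObjective_eq_norm_sub_sq x y S
  have hbound := hx.norm_sub_sq_sub_sparseObjective_le hα T hz horth
  rw [← hS] at hbound
  have hne : (T \ S).Nonempty := by
    rw [nonempty_iff_ne_empty]
    rintro hempty
    rw [hempty, sum_empty, mul_zero] at hbound
    linarith
  obtain ⟨i, hi, hmax⟩ := (T \ S).exists_max_image (fun i => ⟪y - z, x i⟫ ^ 2) hne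
  have hk : (0 : ℝ) < k := by
    exact_mod_cast hne.card_pos.trans_le ((card_le_card sdiff_subset).trans hT)
  have hsum : ∑ j ∈ T \ S, ⟪y - z, x j⟫ ^ 2 ≤ k * ⟪y - z, x i⟫ ^ 2 := by
    calc ∑ j ∈ T \ S, ⟪y - z, x j⟫ ^ 2 ≤ #(T \ S) * ⟪y - z, x i⟫ ^ 2 := by
          simpa using sum_le_card_nsmul _ _ _ hmax
      _ ≤ k * ⟪y - z, x i⟫ ^ 2 := by
          gcongr
          exact_mod_cast (card_le_card sdiff_subset).trans hT
  have hgain : sparseObjective x y S - sparseObjective x y T ≤ α * k * ⟪y - z, x i⟫ ^ 2 :=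
    calc _ ≤ α * ∑ j ∈ T \ S, ⟪y - z, x j⟫ ^ 2 := hbound
      _ ≤ α * (k * ⟪y - z, x i⟫ ^ 2) := by gcongr
      _ = α * k * ⟪y - z, x i⟫ ^ 2 := by ring
  have hinsert := sparseObjective_insert_le (i := i) (y := y) hz (hunit i)
  rw [← hS] at hinsert
  have := (div_le_iff₀' (by positivity)).2 hgain
  refine ⟨i, ?_⟩
  rw [sub_mul, one_mul, inv_mul_eq_div]
  linarith

end SparseRegression

theorem sparse_regression_greedy_general
    (m n : ℕ) (α : ℝ) (hα : 1 ≤ α)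
    (x : Fin n → EuclideanSpace ℝ (Fin m)) (hx : ∀ i, ‖x i‖ = 1)
    (hcond : ∀ (S : Finset (Fin n)) (w : Fin n → ℝ), (∀ i ∉ S, w i = 0) →
      (1 / α) * ∑ i ∈ S, (w i) ^ 2 ≤ ‖∑ i ∈ S, w i • x i‖ ^ 2)
    (y : EuclideanSpace ℝ (Fin m))
    (f : Finset (Fin n) → ℝ)
    (hf : ∀ S : Finset (Fin n), f S =
      (Metric.infDist y
        (Submodule.span ℝ (x '' ↑S) : Set (EuclideanSpace ℝ (Fin m)))) ^ 2)
    (E : ℝ) (hE : 0 < E)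
    (k : ℕ) (hk : 1 ≤ k)
    (hex : ∃ Sstar : Finset (Fin n), Sstar.card ≤ k ∧ f Sstar ≤ E / 4) :
    ∃ S : Finset (Fin n),
      S.card ≤ ⌈α * (k : ℝ) * Real.log (‖y‖ ^ 2 / (E - E / 4))⌉₊ ∧ f S ≤ E := by
  obtain ⟨Sstar, hcard, hSstar⟩ := hex
  obtain rfl : f = sparseObjective x y := funext hf
  have hK : 1 ≤ α * k := one_le_mul_of_one_le_of_one_le hα (by exact_mod_cast hk)
  have hstep (S : Finset (Fin n)) (hgap : sparseObjective x y Sstar < sparseObjective x y S) :=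
    IsWellConditioned.exists_sparseObjective_insert_le hcond (by linarith) hx hcard hgap
  have hempty : sparseObjective x y ∅ - sparseObjective x y Sstar ≤ ‖y‖ ^ 2 := by
    linarith [sparseObjective_empty_le x y, sparseObjective_nonneg x y Sstar]
  obtain ⟨S, hS, hdecay⟩ := exists_card_le_sub_le_mul_pow
    (sub_nonneg.2 (inv_le_one_of_one_le₀ hK)) (sq_nonneg _) hempty hstep
    ⌈α * (k : ℝ) * Real.log (‖y‖ ^ 2 / (E - E / 4))⌉₊
  have hsmall := mul_one_sub_inv_pow_le (a := ‖y‖ ^ 2) (b := E - E / 4) (by linarith) hK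
    (Nat.le_ceil _)
  exact ⟨S, hS, by linarith⟩

/-- Greedy guarantee for sparse regression (improving Natarajan's bound): if some
`S*` with `|S*| ≤ k` achieves `f S* ≤ E/4`, then there is `S` with
`|S| ≤ ⌈α k ln(‖y‖² / (E - E/4))⌉` and `f S ≤ E`. -/
theorem sparse_regression_greedy
    (m n : ℕ) (α : ℝ) (hα : 1 ≤ α)
    (x : Fin n → EuclideanSpace ℝ (Fin m)) (hx : ∀ i, ‖x i‖ = 1)
    (hcond : ∀ (S : Finset (Fin n)) (w : Fin n → ℝ), (∀ i ∉ S, w i = 0) →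
      (1 / α) * ∑ i ∈ S, (w i) ^ 2 ≤ ‖∑ i ∈ S, w i • x i‖ ^ 2)
    (y : EuclideanSpace ℝ (Fin m)) (hy : y ≠ 0)
    (f : Finset (Fin n) → ℝ)
    (hf : ∀ S : Finset (Fin n), f S =
      (Metric.infDist y
        (Submodule.span ℝ (x '' ↑S) : Set (EuclideanSpace ℝ (Fin m)))) ^ 2)
    (E : ℝ) (hE : 0 < E) (hE' : E ≤ ‖y‖ ^ 2)
    (k : ℕ) (hk : 1 ≤ k)
    (hex : ∃ Sstar : Finset (Fin n), Sstar.card ≤ k ∧ f Sstar ≤ E / 4) :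
    ∃ S : Finset (Fin n),
      S.card ≤ ⌈α * (k : ℝ) * Real.log (‖y‖ ^ 2 / (E - E / 4))⌉₊ ∧ f S ≤ E :=
  sparse_regression_greedy_general m n α hα x hx hcond y f hf E hE k hk hex
end
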